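/- For every partition λ and every integer i ≥ 1, ∑_μ ε(μ/λ) = o_i + ∑_ν ε(λ/ν), where the first sum is over partitions μ ⊇ λ such that μ/λ is a ribbon of size i, the second sum is over partitions ν ⊆ λ such that λ/ν is a ribbon of size i, and o_i equals 1 if i is odd and 0 if i is even. -/

import Mathlib

/-!
Index the diagonals by their content `k = c - r` and let `d_μ k` be the row in which diagonal `k`
leaves `μ`. Then `d_μ` determines `μ`, it steps down by `0` or `1` from `k - 1` to `k`, and it steps
down exactly when `k` is a β-number `μ_r - r`. A skew shape `μ / ν` is a ribbon of size `i` exactly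
when `d_μ = d_ν + 1` on `i` consecutive diagonals `s, …, s + i - 1` and `d_μ = d_ν` elsewhere:
connectedness makes the occupied diagonals consecutive, and with no `2 × 2` square each diagonal
carries at most one cell. The height is then `d_ν s - d_ν (s + i - 1)`.

For `d = d_λ`, ribbons added to `λ` therefore correspond to the `s` such that `s` is a β-number and
`s + i` is not, ribbons removed from `λ` to the `s` such that `s + i` is one and `s` is not, both
with sign `G s * G (s + i - 1)` where `G = (-1) ^ d`. Writing `ε k = -1` or `1` according as `k` is
a β-number or not, twice the difference of the two signed sums is
`∑ₛ G s * G (s + i - 1) * (ε (s + i) - ε s)`. As `G (k - 1) = ε k * G k`, this telescopes to the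
value of `G (k - 1) * G (k + i - 1)` far to the right minus its value far to the left, `1 - (-1) ^ i`.
-/

/-- Two cells of `ℕ × ℕ` are adjacent when they share a side. -/
def CellAdj (a b : ℕ × ℕ) : Prop :=
  (a.1 = b.1 ∧ (a.2 + 1 = b.2 ∨ b.2 + 1 = a.2)) ∨
  (a.2 = b.2 ∧ (a.1 + 1 = b.1 ∨ b.1 + 1 = a.1))

/-- A finite set of cells is connected if any two of its cells are joined by a
path of cells of the set, consecutive ones sharing a side. -/
def ConnectedCells (S : Finset (ℕ × ℕ)) : Prop :=
  ∀ a ∈ S, ∀ b ∈ S,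
    Relation.ReflTransGen (fun x y => x ∈ S ∧ y ∈ S ∧ CellAdj x y) a b

/-- `S` contains no 2 × 2 square of cells. -/
def NoTwoByTwo (S : Finset (ℕ × ℕ)) : Prop :=
  ¬ ∃ i j : ℕ, (i, j) ∈ S ∧ (i + 1, j) ∈ S ∧ (i, j + 1) ∈ S ∧ (i + 1, j + 1) ∈ S

/-- The cells of the skew shape `μ / ν` (`ν` first argument, `μ` second). -/
def skewCells (ν μ : YoungDiagram) : Finset (ℕ × ℕ) :=
  μ.cells \ ν.cells

/-- `μ / ν` is a ribbon: a nonempty connected skew shape with no 2 × 2 square. -/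
def IsRibbon (ν μ : YoungDiagram) : Prop :=
  ν ≤ μ ∧ (skewCells ν μ).Nonempty ∧ ConnectedCells (skewCells ν μ) ∧
    NoTwoByTwo (skewCells ν μ)

/-- The height of the skew shape `μ / ν`: the number of rows it occupies, minus one. -/
def skewHeight (ν μ : YoungDiagram) : ℕ :=
  ((skewCells ν μ).image Prod.fst).card - 1

/-- The sign of the skew shape `μ / ν`, i.e. `(-1) ^ height`. -/
def skewSign (ν μ : YoungDiagram) : ℤ :=
  (-1) ^ skewHeight ν μ

theorem CellAdj.symm {a b : ℕ × ℕ} (h : CellAdj a b) : CellAdj b a := by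
  unfold CellAdj at *
  omega

def cellContent (p : ℕ × ℕ) : ℤ := (p.2 : ℤ) - p.1

theorem Relation.ReflTransGen.exists_rel_of_not {α : Type*} {r : α → α → Prop} {p : α → Prop}
    {a b : α} (h : Relation.ReflTransGen r a b) (ha : p a) (hb : ¬ p b) :
    ∃ x y, r x y ∧ p x ∧ ¬ p y := by
  induction h with
  | refl => exact absurd ha hb
  | @tail c d _ hcd ih => exact (em (p c)).elim (fun hc => ⟨c, d, hcd, hc, hb⟩) ih

theorem ConnectedCells.mem_image_cellContent {S : Finset (ℕ × ℕ)} (hS : ConnectedCells S)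
    {k l m : ℤ} (hk : k ∈ S.image cellContent) (hl : l ∈ S.image cellContent) (hkm : k ≤ m)
    (hml : m ≤ l) : m ∈ S.image cellContent := by
  by_contra hm
  obtain ⟨a, ha, rfl⟩ := Finset.mem_image.1 hk
  obtain ⟨b, hb, rfl⟩ := Finset.mem_image.1 hl
  have ham : cellContent a < m :=
    lt_of_le_of_ne hkm fun h => hm (h ▸ Finset.mem_image_of_mem _ ha)
  obtain ⟨x, y, ⟨-, hy, hxy⟩, hx, hy'⟩ :=
    (hS a ha b hb).exists_rel_of_not (p := fun x => cellContent x < m) ham (by simpa using hml)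
  refine hm (Finset.mem_image.2 ⟨y, hy, ?_⟩)
  simp only [CellAdj, cellContent] at hxy hx hy' ⊢
  omega

section DiagonalProfile

variable {d : ℤ → ℕ}

theorem antitone_of_le_apply_sub_one (hanti : ∀ k, d k ≤ d (k - 1)) : Antitone d :=
  antitone_int_of_succ_le fun k => by simpa using hanti (k + 1)

theorem le_apply_add_of_apply_sub_one_le (hlip : ∀ k, d (k - 1) ≤ d k + 1) (k : ℤ) (n : ℕ) :
    d k ≤ d (k + n) + n := by
  induction n with
  | zero => simp
  | succ n ih =>
    have := hlip (k + n + 1)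
    rw [add_sub_cancel_right] at this
    rw [show k + ((n + 1 : ℕ) : ℤ) = k + n + 1 by push_cast; ring]
    omega

theorem isLowerSet_setOf_lt_apply_sub (hanti : ∀ k, d k ≤ d (k - 1))
    (hlip : ∀ k, d (k - 1) ≤ d k + 1) : IsLowerSet {p : ℕ × ℕ | p.1 < d (p.2 - p.1)} := by
  rintro ⟨r, c⟩ ⟨r', c'⟩ ⟨hr, hc⟩ (h : r < d (c - r))
  change r' < d (c' - r')
  rcases le_total ((c' : ℤ) - r') (c - r) with hk | hk
  · exact (hr.trans_lt h).trans_le (antitone_of_le_apply_sub_one hanti hk)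
  · have := le_apply_add_of_apply_sub_one_le hlip (c - r) ((c' : ℤ) - r' - (c - r)).toNat
    rw [show (c : ℤ) - r + ((c' : ℤ) - r' - (c - r)).toNat = c' - r' by omega] at this
    omega

theorem finite_setOf_lt_apply_sub (hanti : ∀ k, d k ≤ d (k - 1))
    (hlip : ∀ k, d (k - 1) ≤ d k + 1) {N : ℕ} (hN : d (-N) ≤ N) {K : ℤ} (hK : d K = 0) :
    {p : ℕ × ℕ | p.1 < d (p.2 - p.1)}.Finite := by
  refine (Finset.range N ×ˢ Finset.range (N + K.toNat)).finite_toSet.subset fun ⟨r, c⟩ h => ?_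
  change r < d (c - r) at h
  have hd := antitone_of_le_apply_sub_one hanti
  have hr : r < N := by
    by_contra! hr
    have h1 := hd (show -(r : ℤ) ≤ c - r by omega)
    have h2 := le_apply_add_of_apply_sub_one_le hlip (-r) (r - N)
    rw [show -(r : ℤ) + (r - N : ℕ) = -N by omega] at h2
    omega
  have hc : c < N + K.toNat := not_le.1 fun hc => by
    have := hd (show K ≤ c - r by omega)
    omega
  simpa using And.intro hr hc

end DiagonalProfile

theorem Int.sum_Ico_sub {M : Type*} [AddCommGroup M] (f : ℤ → M) {a b : ℤ} (hab : a ≤ b) :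
    ∑ k ∈ Finset.Ico a b, (f (k + 1) - f k) = f b - f a := by
  induction b, hab using Int.leInduction with
  | base => simp
  | succ b hab ih =>
    rw [Finset.Ico_add_one_right_eq_Icc, ← Finset.Ico_insert_right hab,
      Finset.sum_insert Finset.right_notMem_Ico, ih]
    abel

theorem sum_Ico_mul_sub_eq {R : Type*} [CommRing R] {G ε : ℤ → R}
    (hG : ∀ k, G (k - 1) = ε k * G k) (hε : ∀ k, ε k * ε k = 1) (i : ℤ) {a b : ℤ} (hab : a ≤ b) :
    ∑ k ∈ Finset.Ico a b, G k * G (k + i - 1) * (ε (k + i) - ε k) =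
      G (b - 1) * G (b + i - 1) - G (a - 1) * G (a + i - 1) := by
  rw [← Int.sum_Ico_sub (fun k => G (k - 1) * G (k + i - 1)) hab]
  refine Finset.sum_congr rfl fun k _ => ?_
  simp only [add_sub_cancel_right, show k + 1 + i - 1 = k + i by ring, hG k, hG (k + i)]
  linear_combination (G k * G (k + i)) * hε (k + i)

theorem Int.neg_one_pow_sub {m n : ℕ} (h : n ≤ m) :
    (-1 : ℤ) ^ (m - n) = (-1) ^ m * (-1) ^ n := by
  obtain ⟨j, rfl⟩ := Nat.exists_eq_add_of_le h
  rw [Nat.add_sub_cancel_left, pow_add, mul_comm, ← mul_assoc, ← pow_add, ← two_mul, pow_mul,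
    neg_one_sq, one_pow, one_mul]

theorem finsum_subtype_eq_of_rel {α β M : Type*} [AddCommMonoid M] {P : α → Prop} {Q : β → Prop}
    (R : α → β → Prop) (hP : ∀ a, P a ↔ ∃ b, R a b) (hQ : ∀ b, Q b ↔ ∃ a, R a b)
    (hfun : ∀ a b b', R a b → R a b' → b = b') (hinj : ∀ a a' b, R a b → R a' b → a = a')
    {f : α → M} {g : β → M} (hfg : ∀ a b, R a b → f a = g b) :
    ∑ᶠ a : Subtype P, f a = ∑ᶠ b : Subtype Q, g b := by
  choose e he using fun a : Subtype P => (hP a).1 a.2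
  refine finsum_eq_of_bijective (fun a => ⟨e a, (hQ _).2 ⟨a, he a⟩⟩)
    ⟨fun a a' haa' => ?_, fun b => ?_⟩ fun a => hfg _ _ (he a)
  · have hea : e a = e a' := congrArg Subtype.val haa'
    exact Subtype.ext (hinj _ _ _ (he a) (hea ▸ he a'))
  · obtain ⟨a, ha⟩ := (hQ b).1 b.2
    exact ⟨⟨a, (hP a).2 ⟨b, ha⟩⟩, Subtype.ext (hfun _ _ _ (he _) ha)⟩

theorem finsum_subtype_eq_sum_ite {α M : Type*} [AddCommMonoid M] {p : α → Prop}
    [DecidablePred p] (f : α → M) {t : Finset α} (ht : ∀ a, p a → a ∈ t) :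
    ∑ᶠ a : Subtype p, f a = ∑ a ∈ t, if p a then f a else 0 := by
  rw [finsum_subtype_eq_finsum_cond, ← Finset.sum_filter]
  exact finsum_cond_eq_sum_of_cond_iff f fun {a} _ =>
    (Finset.mem_filter.trans ⟨And.right, fun h => ⟨ht a h, h⟩⟩).symm

namespace YoungDiagram

theorem rowLen_eq_zero_of_colLen_le {μ : YoungDiagram} {r : ℕ} (h : μ.colLen 0 ≤ r) :
    μ.rowLen r = 0 := by
  by_contra h'
  have := mem_iff_lt_colLen.1 (mem_iff_lt_rowLen.2 (Nat.pos_of_ne_zero h'))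
  omega

theorem exists_rowLen_le_add (μ : YoungDiagram) (k : ℤ) : ∃ r : ℕ, (μ.rowLen r : ℤ) ≤ r + k := by
  refine ⟨μ.colLen 0 + k.natAbs, ?_⟩
  rw [rowLen_eq_zero_of_colLen_le (by omega)]
  omega

/-- The row in which the diagonal of content `k` leaves `μ`: see `mem_iff_lt_diagExit`. -/
def diagExit (μ : YoungDiagram) (k : ℤ) : ℕ :=
  Nat.find (μ.exists_rowLen_le_add k)

variable {μ ν : YoungDiagram}

theorem lt_diagExit_iff {r : ℕ} {k : ℤ} : r < μ.diagExit k ↔ (r : ℤ) + k < μ.rowLen r := by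
  rw [diagExit, Nat.lt_find_iff]
  refine ⟨fun h => not_le.1 (h r le_rfl), fun h m hm => not_le.2 ?_⟩
  have := μ.rowLen_anti m r hm
  omega

theorem mem_iff_lt_diagExit {r c : ℕ} : (r, c) ∈ μ ↔ r < μ.diagExit ((c : ℤ) - r) := by
  rw [lt_diagExit_iff, mem_iff_lt_rowLen]
  omega

theorem neg_le_diagExit (μ : YoungDiagram) (k : ℤ) : -k ≤ μ.diagExit k := by
  by_contra! h
  exact lt_irrefl _ (lt_diagExit_iff.2 (by omega : (μ.diagExit k : ℤ) + k < μ.rowLen _))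

theorem diagExit_le_diagExit_sub_one (μ : YoungDiagram) (k : ℤ) :
    μ.diagExit k ≤ μ.diagExit (k - 1) :=
  le_of_forall_lt fun r hr => lt_diagExit_iff.2 (by have := lt_diagExit_iff.1 hr; omega)

theorem diagExit_sub_one_le (μ : YoungDiagram) (k : ℤ) :
    μ.diagExit (k - 1) ≤ μ.diagExit k + 1 := by
  refine le_of_forall_lt fun r hr => ?_
  rcases r with _ | r
  · omega
  · have h := lt_diagExit_iff.1 hr
    have := μ.rowLen_anti r (r + 1) (by omega)
    have : r < μ.diagExit k := lt_diagExit_iff.2 (by push_cast at h; omega)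
    omega

theorem antitone_diagExit (μ : YoungDiagram) : Antitone μ.diagExit :=
  antitone_of_le_apply_sub_one μ.diagExit_le_diagExit_sub_one

theorem diagExit_eq_zero {k : ℤ} (hk : (μ.rowLen 0 : ℤ) ≤ k) : μ.diagExit k = 0 := by
  by_contra h
  have := lt_diagExit_iff.1 (Nat.pos_of_ne_zero h)
  push_cast at this
  omega

theorem diagExit_eq_neg {k : ℤ} (hk : k ≤ -(μ.colLen 0 : ℤ)) : (μ.diagExit k : ℤ) = -k := by
  suffices μ.diagExit k = (-k).toNat by omega
  refine eq_of_forall_lt_iff fun r => ?_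
  rw [lt_diagExit_iff]
  by_cases hr : μ.colLen 0 ≤ r
  · rw [rowLen_eq_zero_of_colLen_le hr]
    omega
  · omega

theorem le_iff_diagExit_le : ν ≤ μ ↔ ∀ k, ν.diagExit k ≤ μ.diagExit k := by
  refine ⟨fun h k => le_of_forall_lt fun r hr => ?_, fun h ⟨r, c⟩ hν => ?_⟩
  · by_cases hrk : 0 ≤ (r : ℤ) + k
    · have hc : ((r + k).toNat : ℤ) - r = k := by omega
      have hmem : (r, (r + k).toNat) ∈ ν := mem_iff_lt_diagExit.2 (by rwa [hc])
      have := mem_iff_lt_diagExit.1 (h hmem)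
      rwa [hc] at this
    · have := μ.neg_le_diagExit k
      omega
  · exact mem_iff_lt_diagExit.2 ((mem_iff_lt_diagExit.1 hν).trans_le (h _))

theorem ext_diagExit (h : ∀ k, ν.diagExit k = μ.diagExit k) : ν = μ :=
  le_antisymm (le_iff_diagExit_le.2 fun k => (h k).le) (le_iff_diagExit_le.2 fun k => (h k).ge)

noncomputable def ofDiagExit (d : ℤ → ℕ) (hanti : ∀ k, d k ≤ d (k - 1))
    (hlip : ∀ k, d (k - 1) ≤ d k + 1) (hfin : {p : ℕ × ℕ | p.1 < d (p.2 - p.1)}.Finite) : YoungDiagram where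
  cells := hfin.toFinset
  isLowerSet := by
    rw [hfin.coe_toFinset]
    exact isLowerSet_setOf_lt_apply_sub hanti hlip

theorem diagExit_ofDiagExit {d : ℤ → ℕ} {hanti : ∀ k, d k ≤ d (k - 1)}
    {hlip : ∀ k, d (k - 1) ≤ d k + 1} {hfin : {p : ℕ × ℕ | p.1 < d (p.2 - p.1)}.Finite}
    (hneg : ∀ k, -k ≤ d k) : (ofDiagExit d hanti hlip hfin).diagExit = d := by
  funext k
  refine eq_of_forall_lt_iff fun r => ?_
  by_cases hrk : 0 ≤ (r : ℤ) + k
  · have hc : ((r + k).toNat : ℤ) - r = k := by omega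
    rw [← hc, ← mem_iff_lt_diagExit]
    exact hfin.mem_toFinset
  · have := neg_le_diagExit (ofDiagExit d hanti hlip hfin) k
    have := hneg k
    omega

def exitCell (μ : YoungDiagram) (k : ℤ) : ℕ × ℕ :=
  (μ.diagExit k, (μ.diagExit k + k).toNat)

theorem cellContent_exitCell (μ : YoungDiagram) (k : ℤ) : cellContent (μ.exitCell k) = k := by
  have := μ.neg_le_diagExit k
  simp only [cellContent, exitCell]
  omega

theorem exitCell_injective (μ : YoungDiagram) : Function.Injective μ.exitCell :=
  fun k l h => by rw [← μ.cellContent_exitCell k, ← μ.cellContent_exitCell l, h]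

theorem cellAdj_exitCell (μ : YoungDiagram) (k : ℤ) :
    CellAdj (μ.exitCell k) (μ.exitCell (k + 1)) := by
  have h1 := μ.diagExit_le_diagExit_sub_one (k + 1)
  have h2 := μ.diagExit_sub_one_le (k + 1)
  have h3 := μ.neg_le_diagExit k
  rw [add_sub_cancel_right] at h1 h2
  simp only [CellAdj, exitCell]
  omega

theorem image_diagExit_Ico {i : ℕ} (hi : 1 ≤ i) (s : ℤ) :
    (Finset.Ico s (s + i)).image μ.diagExit =
      Finset.Icc (μ.diagExit (s + i - 1)) (μ.diagExit s) := by
  induction i, hi using Nat.le_induction with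
  | base => simp [Finset.Ico_add_one_right_eq_Icc]
  | succ i hi ih =>
    have h1 := μ.diagExit_le_diagExit_sub_one (s + i)
    have h2 := μ.diagExit_sub_one_le (s + i)
    have h3 := μ.antitone_diagExit (show s ≤ s + i - 1 by omega)
    rw [Nat.cast_succ, ← add_assoc, Finset.Ico_add_one_right_eq_Icc,
      ← Finset.Ico_insert_right (by omega), Finset.image_insert, ih, add_sub_cancel_right]
    ext r
    simp only [Finset.mem_insert, Finset.mem_Icc]
    omega

end YoungDiagram

open YoungDiagram

theorem mem_skewCells_iff {ν μ : YoungDiagram} {r c : ℕ} :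
    (r, c) ∈ skewCells ν μ ↔ ν.diagExit (c - r) ≤ r ∧ r < μ.diagExit (c - r) := by
  rw [skewCells, Finset.mem_sdiff, mem_cells, mem_cells, mem_iff_lt_diagExit,
    mem_iff_lt_diagExit, not_lt, and_comm]

/-- `μ / ν` has one cell on each diagonal of content `s, …, s + i - 1` and no other cell. -/
def IsDiagonalStrip (ν μ : YoungDiagram) (s : ℤ) (i : ℕ) : Prop :=
  ∀ k, μ.diagExit k = ν.diagExit k + if s ≤ k ∧ k < s + i then 1 else 0

namespace IsDiagonalStrip

variable {ν μ : YoungDiagram} {s : ℤ} {i : ℕ}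

theorem diagExit_of_mem (h : IsDiagonalStrip ν μ s i) {k : ℤ} (hs : s ≤ k) (hi : k < s + i) :
    μ.diagExit k = ν.diagExit k + 1 := by
  rw [h k, if_pos ⟨hs, hi⟩]

theorem diagExit_of_not_mem (h : IsDiagonalStrip ν μ s i) {k : ℤ} (hk : k < s ∨ s + i ≤ k) :
    μ.diagExit k = ν.diagExit k := by
  rw [h k, if_neg (by omega), add_zero]

theorem le (h : IsDiagonalStrip ν μ s i) : ν ≤ μ :=
  le_iff_diagExit_le.2 fun k => by rw [h k]; omega

theorem skewCells_eq (h : IsDiagonalStrip ν μ s i) :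
    skewCells ν μ = (Finset.Ico s (s + i)).image ν.exitCell := by
  ext ⟨r, c⟩
  simp only [mem_skewCells_iff, h _, Finset.mem_image, Finset.mem_Ico, exitCell, Prod.mk.injEq]
  constructor
  · intro hrc
    refine ⟨c - r, ?_, ?_, ?_⟩ <;> split_ifs at hrc <;> omega
  · rintro ⟨k, hk, rfl, rfl⟩
    have := ν.neg_le_diagExit k
    rw [show (((ν.diagExit k : ℤ) + k).toNat : ℤ) - ν.diagExit k = k by omega, if_pos hk]
    omega

theorem card_skewCells (h : IsDiagonalStrip ν μ s i) : (skewCells ν μ).card = i := by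
  rw [h.skewCells_eq, Finset.card_image_of_injective _ ν.exitCell_injective, Int.card_Ico]
  omega

theorem skewHeight_eq (h : IsDiagonalStrip ν μ s i) (hi : 1 ≤ i) :
    skewHeight ν μ = ν.diagExit s - ν.diagExit (s + i - 1) := by
  rw [skewHeight, h.skewCells_eq, Finset.image_image,
    show Prod.fst ∘ ν.exitCell = ν.diagExit from rfl, image_diagExit_Ico hi, Nat.card_Icc]
  omega

theorem isRibbon (h : IsDiagonalStrip ν μ s i) (hi : 1 ≤ i) : IsRibbon ν μ := by
  set rel := fun x y => x ∈ skewCells ν μ ∧ y ∈ skewCells ν μ ∧ CellAdj x y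
  have hmem : ∀ k, s ≤ k → k < s + i → ν.exitCell k ∈ skewCells ν μ := fun k hk hk' => by
    rw [h.skewCells_eq]
    exact Finset.mem_image_of_mem _ (Finset.mem_Ico.2 ⟨hk, hk'⟩)
  have hreach : ∀ k, s ≤ k → k < s + i →
      Relation.ReflTransGen rel (ν.exitCell s) (ν.exitCell k) := by
    intro k hk
    induction k, hk using Int.leInduction with
    | base => exact fun _ => .refl
    | succ k hk ih =>
      exact fun hki => (ih (by omega)).tail
        ⟨hmem k hk (by omega), hmem (k + 1) (by omega) hki, ν.cellAdj_exitCell k⟩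
  have : Std.Symm rel := ⟨fun _ _ ⟨hx, hy, hxy⟩ => ⟨hy, hx, hxy.symm⟩⟩
  refine ⟨h.le, ⟨_, hmem s le_rfl (by omega)⟩, ?_, ?_⟩
  · intro x hx y hy
    rw [h.skewCells_eq, Finset.mem_image] at hx hy
    obtain ⟨k, hk, rfl⟩ := hx
    obtain ⟨l, hl, rfl⟩ := hy
    rw [Finset.mem_Ico] at hk hl
    exact (Std.Symm.symm _ _ (hreach k hk.1 hk.2)).trans (hreach l hl.1 hl.2)
  · -- opposite corners of a square lie on one diagonal, which meets `μ / ν` at most once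
    rintro ⟨r, c, h00, -, -, h11⟩
    rw [mem_skewCells_iff, h] at h00 h11
    push_cast at h11
    rw [show (c : ℤ) + 1 - (r + 1) = c - r by ring] at h11
    split_ifs at h00 h11 <;> omega

end IsDiagonalStrip

namespace YoungDiagram

variable {ν μ : YoungDiagram}

theorem diagExit_le_diagExit_add_one_of_noTwoByTwo (hle : ν ≤ μ)
    (h : NoTwoByTwo (skewCells ν μ)) (k : ℤ) : μ.diagExit k ≤ ν.diagExit k + 1 := by
  by_contra! hk
  have hk' := le_iff_diagExit_le.1 hle
  have := ν.neg_le_diagExit k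
  have := μ.diagExit_le_diagExit_sub_one k
  have := ν.diagExit_sub_one_le k
  have h3 := μ.diagExit_sub_one_le (k + 1)
  have h4 := ν.diagExit_le_diagExit_sub_one (k + 1)
  rw [add_sub_cancel_right] at h3 h4
  have hcell : ∀ (r c : ℕ) (l : ℤ), (c : ℤ) - r = l → ν.diagExit l ≤ r → r < μ.diagExit l →
      (r, c) ∈ skewCells ν μ := fun r c l hl h1 h2 => mem_skewCells_iff.2 (hl ▸ ⟨h1, h2⟩)
  -- two cells of `μ / ν` on the diagonal `k` complete a `2 × 2` square
  set r := ν.diagExit k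
  set c := ((r : ℤ) + k).toNat
  exact h ⟨r, c, hcell r c k (by omega) le_rfl (by omega),
    hcell (r + 1) c (k - 1) (by omega) (by omega) (by omega),
    hcell r (c + 1) (k + 1) (by omega) (by omega) (by omega),
    hcell (r + 1) (c + 1) k (by omega) (by omega) (by omega)⟩

theorem mem_image_cellContent_skewCells {k : ℤ} :
    k ∈ (skewCells ν μ).image cellContent ↔ ν.diagExit k < μ.diagExit k := by
  refine ⟨fun hk => ?_, fun hk => Finset.mem_image.2 ⟨ν.exitCell k, ?_, ν.cellContent_exitCell k⟩⟩
  · obtain ⟨⟨r, c⟩, hrc, rfl⟩ := Finset.mem_image.1 hk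
    have := mem_skewCells_iff.1 hrc
    exact this.1.trans_lt this.2
  · have := ν.cellContent_exitCell k
    rw [cellContent, exitCell] at this
    rw [exitCell, mem_skewCells_iff, this]
    exact ⟨le_rfl, hk⟩

end YoungDiagram

theorem IsRibbon.exists_isDiagonalStrip {ν μ : YoungDiagram} (h : IsRibbon ν μ) :
    ∃ s, IsDiagonalStrip ν μ s (skewCells ν μ).card := by
  obtain ⟨hle, hne, hconn, h22⟩ := h
  set K := (skewCells ν μ).image cellContent
  have hle' := le_iff_diagExit_le.1 hle
  have hone := diagExit_le_diagExit_add_one_of_noTwoByTwo hle h22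
  have hcard : K.card = (skewCells ν μ).card := by
    refine Finset.card_image_of_injOn fun ⟨r, c⟩ hrc ⟨r', c'⟩ hrc' hcont => ?_
    have := mem_skewCells_iff.1 hrc
    have := mem_skewCells_iff.1 hrc'
    simp only [cellContent] at hcont
    rw [← hcont] at this
    have := hone ((c : ℤ) - r)
    simp only [Prod.mk.injEq]
    omega
  have hKne : K.Nonempty := hne.image _
  have hK : K = Finset.Icc (K.min' hKne) (K.max' hKne) := by
    ext k
    refine ⟨fun hk => Finset.mem_Icc.2 ⟨K.min'_le k hk, K.le_max' k hk⟩, fun hk => ?_⟩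
    rw [Finset.mem_Icc] at hk
    exact hconn.mem_image_cellContent (K.min'_mem hKne) (K.max'_mem hKne) hk.1 hk.2
  have hcard' := Int.card_Icc (K.min' hKne) (K.max' hKne)
  rw [← hK, hcard] at hcard'
  refine ⟨K.min' hKne, fun k => ?_⟩
  have hkK : k ∈ K ↔ K.min' hKne ≤ k ∧ k < K.min' hKne + (skewCells ν μ).card := by
    conv_lhs => rw [hK]
    rw [Finset.mem_Icc]
    omega
  have := hle' k
  have := hone k
  split_ifs with hk
  · have := mem_image_cellContent_skewCells.1 (hkK.2 hk)
    omega
  · have := mt mem_image_cellContent_skewCells.2 (mt hkK.1 hk)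
    omega

theorem isRibbon_and_card_eq_iff {ν μ : YoungDiagram} {i : ℕ} (hi : 1 ≤ i) :
    IsRibbon ν μ ∧ (skewCells ν μ).card = i ↔ ∃ s, IsDiagonalStrip ν μ s i :=
  ⟨fun ⟨h, hc⟩ => hc ▸ h.exists_isDiagonalStrip, fun ⟨_, h⟩ => ⟨h.isRibbon hi, h.card_skewCells⟩⟩

namespace YoungDiagram

/-- `k` is a β-number of `μ`, i.e. `k = μ.rowLen r - r` for some row `r`. -/
def IsBeta (μ : YoungDiagram) (k : ℤ) : Prop :=
  μ.diagExit k < μ.diagExit (k - 1)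

instance (μ : YoungDiagram) : DecidablePred μ.IsBeta :=
  fun k => inferInstanceAs (Decidable (μ.diagExit k < μ.diagExit (k - 1)))

variable {μ : YoungDiagram}

theorem isBeta_of_le_neg_colLen {k : ℤ} (hk : k ≤ -(μ.colLen 0 : ℤ)) : μ.IsBeta k := by
  have h1 := diagExit_eq_neg hk
  have h2 := diagExit_eq_neg (μ := μ) (show k - 1 ≤ -(μ.colLen 0 : ℤ) by omega)
  rw [IsBeta]
  omega

theorem not_isBeta_of_rowLen_lt {k : ℤ} (hk : (μ.rowLen 0 : ℤ) < k) : ¬ μ.IsBeta k := by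
  rw [IsBeta, diagExit_eq_zero hk.le, diagExit_eq_zero (by omega)]
  exact lt_irrefl 0

theorem one_le_diagExit_of_isBeta {t k : ℤ} (ht : μ.IsBeta t) (hk : k < t) :
    1 ≤ μ.diagExit k := by
  have := μ.antitone_diagExit (show k ≤ t - 1 by omega)
  rw [IsBeta] at ht
  omega

theorem one_le_diagExit_add_of_not_isBeta {s k : ℤ} (hs : ¬ μ.IsBeta s) (hk : s ≤ k) :
    1 ≤ (μ.diagExit k : ℤ) + k := by
  have h1 := μ.neg_le_diagExit (s - 1)
  have h2 := le_apply_add_of_apply_sub_one_le μ.diagExit_sub_one_le s (k - s).toNat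
  rw [show s + ((k - s).toNat : ℤ) = k by omega] at h2
  rw [IsBeta, not_lt] at hs
  omega

theorem neg_one_pow_diagExit_sub_one (μ : YoungDiagram) (k : ℤ) :
    (-1 : ℤ) ^ μ.diagExit (k - 1) = (if μ.IsBeta k then -1 else 1) * (-1) ^ μ.diagExit k := by
  have := μ.diagExit_le_diagExit_sub_one k
  have := μ.diagExit_sub_one_le k
  by_cases hk : μ.IsBeta k
  · rw [if_pos hk, show μ.diagExit (k - 1) = μ.diagExit k + 1 by rw [IsBeta] at hk; omega,
      pow_succ, mul_comm]
  · rw [if_neg hk, show μ.diagExit (k - 1) = μ.diagExit k by rw [IsBeta] at hk; omega, one_mul]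

theorem exists_isDiagonalStrip_of_isBeta {s : ℤ} {i : ℕ} (hs : μ.IsBeta s)
    (hsi : ¬ μ.IsBeta (s + i)) : ∃ μ', IsDiagonalStrip μ μ' s i := by
  set d : ℤ → ℕ := fun k => μ.diagExit k + if s ≤ k ∧ k < s + i then 1 else 0
  have hanti : ∀ k, d k ≤ d (k - 1) := fun k => by
    rcases eq_or_ne k s with rfl | hk
    · simp only [d, IsBeta] at hs ⊢
      split_ifs <;> omega
    · have := μ.diagExit_le_diagExit_sub_one k
      simp only [d]
      split_ifs <;> omega
  have hlip : ∀ k, d (k - 1) ≤ d k + 1 := fun k => by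
    rcases eq_or_ne k (s + i) with rfl | hk
    · simp only [d, IsBeta] at hsi ⊢
      split_ifs <;> omega
    · have := μ.diagExit_sub_one_le k
      simp only [d]
      split_ifs <;> omega
  have hN : d (-(μ.colLen 0 + s.natAbs + 1 : ℕ)) ≤ μ.colLen 0 + s.natAbs + 1 := by
    have := diagExit_eq_neg (μ := μ) (k := -(μ.colLen 0 + s.natAbs + 1 : ℕ)) (by omega)
    simp only [d]
    split_ifs <;> omega
  have hK : d (μ.rowLen 0 + s.natAbs + i) = 0 := by
    simp only [d, diagExit_eq_zero (show (μ.rowLen 0 : ℤ) ≤ μ.rowLen 0 + s.natAbs + i by omega)]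
    split_ifs <;> omega
  refine ⟨ofDiagExit d hanti hlip (finite_setOf_lt_apply_sub hanti hlip hN hK), fun k => ?_⟩
  rw [diagExit_ofDiagExit fun k =>
    (μ.neg_le_diagExit k).trans (Nat.cast_le.2 (Nat.le_add_right _ _))]

theorem exists_isDiagonalStrip_of_not_isBeta {s : ℤ} {i : ℕ} (hs : ¬ μ.IsBeta s)
    (hsi : μ.IsBeta (s + i)) : ∃ ν, IsDiagonalStrip ν μ s i := by
  have hpos : ∀ k, k < s + i → 1 ≤ μ.diagExit k := fun k => one_le_diagExit_of_isBeta hsi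
  set d : ℤ → ℕ := fun k => μ.diagExit k - if s ≤ k ∧ k < s + i then 1 else 0
  have hanti : ∀ k, d k ≤ d (k - 1) := fun k => by
    rcases eq_or_ne k (s + i) with rfl | hk
    · simp only [d, IsBeta] at hsi ⊢
      split_ifs <;> omega
    · have := μ.diagExit_le_diagExit_sub_one k
      have := hpos k
      have := hpos (k - 1)
      simp only [d]
      split_ifs <;> omega
  have hlip : ∀ k, d (k - 1) ≤ d k + 1 := fun k => by
    rcases eq_or_ne k s with rfl | hk
    · have := μ.diagExit_le_diagExit_sub_one k
      simp only [d, IsBeta] at hs ⊢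
      split_ifs <;> omega
    · have := μ.diagExit_sub_one_le k
      have := hpos k
      simp only [d]
      split_ifs <;> omega
  have hN : d (-μ.colLen 0) ≤ μ.colLen 0 := by
    have := diagExit_eq_neg (μ := μ) (k := -μ.colLen 0) le_rfl
    simp only [d]
    omega
  have hK : d (μ.rowLen 0) = 0 := by
    simp only [d, diagExit_eq_zero le_rfl, Nat.zero_sub]
  have hneg : ∀ k, -k ≤ d k := fun k => by
    have := μ.neg_le_diagExit k
    simp only [d]
    split_ifs with hk
    · have := one_le_diagExit_add_of_not_isBeta hs hk.1
      omega
    · omega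
  refine ⟨ofDiagExit d hanti hlip (finite_setOf_lt_apply_sub hanti hlip hN hK), fun k => ?_⟩
  rw [diagExit_ofDiagExit hneg]
  have := hpos k
  simp only [d]
  split_ifs <;> omega

end YoungDiagram

namespace IsDiagonalStrip

variable {ν μ : YoungDiagram} {s : ℤ} {i : ℕ}

theorem isBeta_left (h : IsDiagonalStrip ν μ s i) (hi : 1 ≤ i) : ν.IsBeta s := by
  have := h.diagExit_of_mem le_rfl (by omega)
  have := h.diagExit_of_not_mem (k := s - 1) (by omega)
  have := μ.diagExit_le_diagExit_sub_one s
  rw [IsBeta]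
  omega

theorem not_isBeta_left_add (h : IsDiagonalStrip ν μ s i) (hi : 1 ≤ i) :
    ¬ ν.IsBeta (s + i) := by
  have := h.diagExit_of_mem (k := s + i - 1) (by omega) (by omega)
  have := h.diagExit_of_not_mem (k := s + i) (by omega)
  have := μ.diagExit_sub_one_le (s + i)
  rw [IsBeta]
  omega

theorem not_isBeta_right (h : IsDiagonalStrip ν μ s i) (hi : 1 ≤ i) : ¬ μ.IsBeta s := by
  have := h.diagExit_of_mem le_rfl (by omega)
  have := h.diagExit_of_not_mem (k := s - 1) (by omega)
  have := ν.diagExit_sub_one_le s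
  rw [IsBeta]
  omega

theorem isBeta_right_add (h : IsDiagonalStrip ν μ s i) (hi : 1 ≤ i) : μ.IsBeta (s + i) := by
  have := h.diagExit_of_mem (k := s + i - 1) (by omega) (by omega)
  have := h.diagExit_of_not_mem (k := s + i) (by omega)
  have := ν.diagExit_le_diagExit_sub_one (s + i)
  rw [IsBeta]
  omega

theorem right_unique {μ' : YoungDiagram} (h : IsDiagonalStrip ν μ s i)
    (h' : IsDiagonalStrip ν μ' s i) : μ = μ' :=
  ext_diagExit fun k => by rw [h k, h' k]

theorem left_unique {ν' : YoungDiagram} (h : IsDiagonalStrip ν μ s i)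
    (h' : IsDiagonalStrip ν' μ s i) : ν = ν' :=
  ext_diagExit fun k => by have := h k; have := h' k; omega

theorem start_unique {s' : ℤ} (h : IsDiagonalStrip ν μ s i) (h' : IsDiagonalStrip ν μ s' i)
    (hi : 1 ≤ i) : s = s' := by
  have := h s
  have := h' s
  have := h s'
  have := h' s'
  split_ifs at * <;> omega

end IsDiagonalStrip

namespace YoungDiagram

variable {μ : YoungDiagram} {s : ℤ} {i : ℕ}

theorem exists_isDiagonalStrip_right_iff (hi : 1 ≤ i) :
    (∃ μ', IsDiagonalStrip μ μ' s i) ↔ μ.IsBeta s ∧ ¬ μ.IsBeta (s + i) :=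
  ⟨fun ⟨_, h⟩ => ⟨h.isBeta_left hi, h.not_isBeta_left_add hi⟩,
    fun h => exists_isDiagonalStrip_of_isBeta h.1 h.2⟩

theorem exists_isDiagonalStrip_left_iff (hi : 1 ≤ i) :
    (∃ ν, IsDiagonalStrip ν μ s i) ↔ ¬ μ.IsBeta s ∧ μ.IsBeta (s + i) :=
  ⟨fun ⟨_, h⟩ => ⟨h.not_isBeta_right hi, h.isBeta_right_add hi⟩,
    fun h => exists_isDiagonalStrip_of_not_isBeta h.1 h.2⟩

theorem sum_Ico_neg_one_pow_diagExit_mul (μ : YoungDiagram) (i : ℕ) :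
    ∑ s ∈ Finset.Ico (-(μ.colLen 0 + i : ℤ)) (μ.rowLen 0 + 1),
      (-1 : ℤ) ^ μ.diagExit s * (-1) ^ μ.diagExit (s + i - 1) *
        ((if μ.IsBeta (s + i) then -1 else 1) - if μ.IsBeta s then -1 else 1) = 1 - (-1) ^ i := by
  rw [sum_Ico_mul_sub_eq (G := fun k => (-1) ^ μ.diagExit k) μ.neg_one_pow_diagExit_sub_one
    (fun k => by split_ifs <;> norm_num) i (by omega)]
  have h1 := diagExit_eq_neg (μ := μ) (k := -(μ.colLen 0 + i) - 1) (by omega)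
  have h2 := diagExit_eq_neg (μ := μ) (k := -(μ.colLen 0 + i) + i - 1) (by omega)
  rw [diagExit_eq_zero (by omega), diagExit_eq_zero (by omega), pow_zero, one_mul,
    show μ.diagExit (-(μ.colLen 0 + i) - 1) = μ.colLen 0 + 1 + i by omega,
    show μ.diagExit (-(μ.colLen 0 + i) + i - 1) = μ.colLen 0 + 1 by omega, pow_add,
    mul_right_comm, ← pow_add, ← two_mul, pow_mul, neg_one_sq, one_pow, one_mul]

theorem finsum_isBeta_not_isBeta_add (μ : YoungDiagram) {i : ℕ} (hi : 1 ≤ i) :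
    ∑ᶠ s : {s // μ.IsBeta s ∧ ¬ μ.IsBeta (s + i)},
        (-1 : ℤ) ^ (μ.diagExit s - μ.diagExit (s + i - 1)) =
      (if Odd i then 1 else 0) +
        ∑ᶠ s : {s // ¬ μ.IsBeta s ∧ μ.IsBeta (s + i)},
          (-1 : ℤ) ^ (μ.diagExit s - μ.diagExit (s + i - 1)) := by
  set W := Finset.Ico (-(μ.colLen 0 + i : ℤ)) (μ.rowLen 0 + 1)
  have hW : ∀ s, s ∉ W → (μ.IsBeta s ↔ μ.IsBeta (s + i)) := fun s hs => by
    rw [Finset.mem_Ico, not_and_or, not_le, not_lt] at hs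
    rcases hs with hs | hs
    · exact iff_of_true (isBeta_of_le_neg_colLen (by omega)) (isBeta_of_le_neg_colLen (by omega))
    · exact iff_of_false (not_isBeta_of_rowLen_lt (by omega)) (not_isBeta_of_rowLen_lt (by omega))
  set σ : ℤ → ℤ := fun s => (-1) ^ (μ.diagExit s - μ.diagExit (s + i - 1))
  rw [finsum_subtype_eq_sum_ite σ (t := W) fun s hs => by_contra fun h => by have := hW s h; tauto,
    finsum_subtype_eq_sum_ite σ (t := W) fun s hs => by_contra fun h => by have := hW s h; tauto]
  have htel := μ.sum_Ico_neg_one_pow_diagExit_mul i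
  have hterm : ∀ s ∈ W, (-1 : ℤ) ^ μ.diagExit s * (-1) ^ μ.diagExit (s + i - 1) *
      ((if μ.IsBeta (s + i) then -1 else 1) - if μ.IsBeta s then -1 else 1) =
      2 * ((if μ.IsBeta s ∧ ¬ μ.IsBeta (s + i) then σ s else 0) -
        (if ¬ μ.IsBeta s ∧ μ.IsBeta (s + i) then σ s else 0)) := fun s _ => by
    simp only [σ]
    rw [Int.neg_one_pow_sub (μ.antitone_diagExit (by omega : s ≤ s + i - 1))]
    split_ifs <;> first | tauto | ring
  rw [Finset.sum_congr rfl hterm, ← Finset.mul_sum, Finset.sum_sub_distrib] at htel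
  rcases Nat.even_or_odd i with h | h
  · rw [if_neg (Nat.not_odd_iff_even.2 h)]
    rw [h.neg_one_pow] at htel
    linarith
  · rw [if_pos h]
    rw [h.neg_one_pow] at htel
    linarith

end YoungDiagram

theorem finsum_skewSign_addable (μ : YoungDiagram) {i : ℕ} (hi : 1 ≤ i) :
    ∑ᶠ μ' : {μ' // IsRibbon μ μ' ∧ (skewCells μ μ').card = i}, skewSign μ μ'.1 =
      ∑ᶠ s : {s // μ.IsBeta s ∧ ¬ μ.IsBeta (s + i)},
        (-1 : ℤ) ^ (μ.diagExit s - μ.diagExit (s + i - 1)) :=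
  finsum_subtype_eq_of_rel (f := skewSign μ)
    (g := fun s => (-1 : ℤ) ^ (μ.diagExit s - μ.diagExit (s + i - 1)))
    (fun μ' s => IsDiagonalStrip μ μ' s i)
    (fun _ => isRibbon_and_card_eq_iff hi) (fun _ => (exists_isDiagonalStrip_right_iff hi).symm)
    (fun _ _ _ h h' => h.start_unique h' hi) (fun _ _ _ h h' => h.right_unique h')
    fun _ _ h => by rw [skewSign, h.skewHeight_eq hi]

theorem finsum_skewSign_removable (μ : YoungDiagram) {i : ℕ} (hi : 1 ≤ i) :
    ∑ᶠ ν : {ν // IsRibbon ν μ ∧ (skewCells ν μ).card = i}, skewSign ν.1 μ =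
      ∑ᶠ s : {s // ¬ μ.IsBeta s ∧ μ.IsBeta (s + i)},
        (-1 : ℤ) ^ (μ.diagExit s - μ.diagExit (s + i - 1)) :=
  finsum_subtype_eq_of_rel (f := fun ν => skewSign ν μ)
    (g := fun s => (-1 : ℤ) ^ (μ.diagExit s - μ.diagExit (s + i - 1)))
    (fun ν s => IsDiagonalStrip ν μ s i)
    (fun _ => isRibbon_and_card_eq_iff hi) (fun _ => (exists_isDiagonalStrip_left_iff hi).symm)
    (fun _ _ _ h h' => h.start_unique h' hi) (fun _ _ _ h h' => h.left_unique h')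
    fun _ _ h => by
      rw [skewSign, h.skewHeight_eq hi, h.diagExit_of_mem le_rfl (by omega),
        h.diagExit_of_mem (k := _ + i - 1) (by omega) (by omega), Nat.add_sub_add_right]

/-- For every partition `λ` and `i ≥ 1`, the signed sum of the ribbons of size
`i` addable to `λ` equals `o_i` (1 if `i` is odd, 0 otherwise) plus the signed
sum of the ribbons of size `i` removable from `λ`. -/
theorem stmt10 (lam : YoungDiagram) (i : ℕ) (hi : 1 ≤ i) :
    ∑ᶠ μ : {μ : YoungDiagram // IsRibbon lam μ ∧ (skewCells lam μ).card = i},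
        skewSign lam μ.1 =
      (if Odd i then 1 else 0) +
        ∑ᶠ ν : {ν : YoungDiagram // IsRibbon ν lam ∧ (skewCells ν lam).card = i},
          skewSign ν.1 lam := by
  rw [finsum_skewSign_addable lam hi, finsum_skewSign_removable lam hi]
  exact lam.finsum_isBeta_not_isBeta_add hi
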